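/- Let u_θ be an MLP with scalar input and output in which all hidden layers have the same width d (d₁ = ⋯ = d_L = d), with all biases equal to zero, and suppose the entries of the weight matrices W⁽¹⁾,…,W⁽ᴸ⁺¹⁾ are jointly independent square-integrable real random variables on a probability space, each with mean zero, where every entry of W⁽¹⁾ and of W⁽ᴸ⁺¹⁾ has variance 2/(d+1) and every entry of W⁽ˡ⁾ for 2 ≤ l ≤ L has variance 1/d. Assume σ : ℝ → ℝ is differentiable with measurable derivative satisfying |σ'(t)| ≤ 1 for all t ∈ ℝ. Then for every fixed x ∈ ℝ and every ε > 0, ℙ( |∂u_θ/∂x (x)| > ε ) ≤ 4/(d ε²). -/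

import Mathlib

open Matrix MeasureTheory ProbabilityTheory

/-! Forward-mode differentiation gives the derivative as `X L i`, where
`X 0 = W 0 *ᵥ 1` and `X (l + 1) = W (l + 1) *ᵥ (σ' (u l) * X l)`. An entry of a row of `W (l + 1)`
is centred and independent of the other entries of the row and of everything computed from the
earlier layers, so the cross terms of `E[(X (l + 1) i)²]` vanish and, as `|σ'| ≤ 1`,
`E[(X (l + 1) i)²] ≤ Var W (l + 1) · ∑ j, E[(X l j)²]`. With the Glorot variances the total second
moment is `2m/(m+1)` after the first layer and does not grow through the hidden layers, so
`E[(∂u/∂x)²] ≤ 4m/(m+1)² ≤ 4/m`, and Markov's inequality for the square concludes. -/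

/-- The pre-activation values `u⁽ˡ⁺¹⁾(x)` of an MLP with scalar input,
dimensions `d`, weights `W`, biases `b` and activation `σ`:
`u⁽¹⁾(x) = W⁽¹⁾ x + b⁽¹⁾` and `u⁽ˡ⁺¹⁾(x) = W⁽ˡ⁺¹⁾ σ(u⁽ˡ⁾(x)) + b⁽ˡ⁺¹⁾`.
Here `mlpPre d W b σ l` is `u⁽ˡ⁺¹⁾`, so `W l` is the weight matrix `W⁽ˡ⁺¹⁾`. -/
noncomputable def mlpPre (d : ℕ → ℕ)
    (W : (l : ℕ) → Matrix (Fin (d (l + 1))) (Fin (d l)) ℝ)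
    (b : (l : ℕ) → Fin (d (l + 1)) → ℝ) (σ : ℝ → ℝ) :
    (l : ℕ) → ℝ → Fin (d (l + 1)) → ℝ
  | 0, x => W 0 *ᵥ (fun _ => x) + b 0
  | l + 1, x => W (l + 1) *ᵥ (fun i => σ (mlpPre d W b σ l x i)) + b (l + 1)

noncomputable def mlpDeriv (d : ℕ → ℕ)
    (W : (l : ℕ) → Matrix (Fin (d (l + 1))) (Fin (d l)) ℝ)
    (b : (l : ℕ) → Fin (d (l + 1)) → ℝ) (σ : ℝ → ℝ) (x : ℝ) :
    (l : ℕ) → Fin (d (l + 1)) → ℝ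
  | 0 => W 0 *ᵥ fun _ => 1
  | l + 1 => W (l + 1) *ᵥ fun j => deriv σ (mlpPre d W b σ l x j) * mlpDeriv d W b σ x l j

section Deterministic

variable {d : ℕ → ℕ} {b : (l : ℕ) → Fin (d (l + 1)) → ℝ} {σ : ℝ → ℝ}

theorem hasDerivAt_mlpPre (W : (l : ℕ) → Matrix (Fin (d (l + 1))) (Fin (d l)) ℝ)
    (hσ : Differentiable ℝ σ) (x : ℝ) (l : ℕ) (i : Fin (d (l + 1))) :
    HasDerivAt (fun t => mlpPre d W b σ l t i) (mlpDeriv d W b σ x l i) x := by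
  induction l with
  | zero =>
    simp only [mlpPre, mlpDeriv, mulVec, dotProduct, Pi.add_apply]
    simpa using (HasDerivAt.fun_sum fun j _ => (hasDerivAt_id x).const_mul (W 0 i j)).add_const
      (b 0 i)
  | succ l ih =>
    simp only [mlpPre, mlpDeriv, mulVec, dotProduct, Pi.add_apply]
    exact (HasDerivAt.fun_sum fun j _ =>
      (((hσ _).hasDerivAt.comp x (ih j))).const_mul (W (l + 1) i j)).add_const (b (l + 1) i)

variable {α : Type*} {mα : MeasurableSpace α}
  {W : (l : ℕ) → α → Matrix (Fin (d (l + 1))) (Fin (d l)) ℝ}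

theorem measurable_mlpPre (hσ : Measurable σ) (x : ℝ) {l : ℕ}
    (hW : ∀ l' ≤ l, ∀ i j, Measurable fun a => W l' a i j) (i : Fin (d (l + 1))) :
    Measurable fun a => mlpPre d (fun l' => W l' a) b σ l x i := by
  induction l with
  | zero =>
    simp only [mlpPre, mulVec, dotProduct, Pi.add_apply]
    exact (Finset.measurable_sum _ fun j _ => (hW 0 le_rfl i j).mul_const x).add_const _
  | succ l ih =>
    simp only [mlpPre, mulVec, dotProduct, Pi.add_apply]
    have ih' := ih fun l' hl' => hW l' (hl'.trans l.le_succ)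
    exact (Finset.measurable_sum _ fun j _ =>
      (hW (l + 1) le_rfl i j).mul (hσ.comp (ih' j))).add_const _

theorem measurable_mlpDeriv (hσ : Measurable σ) (hσ' : Measurable (deriv σ)) (x : ℝ) {l : ℕ}
    (hW : ∀ l' ≤ l, ∀ i j, Measurable fun a => W l' a i j) (i : Fin (d (l + 1))) :
    Measurable fun a => mlpDeriv d (fun l' => W l' a) b σ x l i := by
  induction l with
  | zero =>
    simp only [mlpDeriv, mulVec, dotProduct]
    exact Finset.measurable_sum _ fun j _ => (hW 0 le_rfl i j).mul_const 1
  | succ l ih =>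
    simp only [mlpDeriv, mulVec, dotProduct]
    have hW' : ∀ l' ≤ l, ∀ i j, Measurable fun a => W l' a i j :=
      fun l' hl' => hW l' (hl'.trans l.le_succ)
    exact Finset.measurable_sum _ fun j _ => (hW (l + 1) le_rfl i j).mul
      ((hσ'.comp (measurable_mlpPre hσ x hW' j)).mul (ih hW' j))

end Deterministic

section SecondMoment

variable {Ω : Type*} {mΩ : MeasurableSpace Ω} {μ : Measure Ω}

theorem ProbabilityTheory.IndepFun.memLp_two_mul {A Y : Ω → ℝ} (hAY : IndepFun A Y μ)
    (hA : MemLp A 2 μ) (hY : MemLp Y 2 μ) : MemLp (fun ω => A ω * Y ω) 2 μ := by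
  refine (memLp_two_iff_integrable_sq (hA.1.mul hY.1)).2 ?_
  have hsq : IndepFun (fun ω => A ω ^ 2) (fun ω => Y ω ^ 2) μ :=
    hAY.comp (measurable_id.pow_const 2) (measurable_id.pow_const 2)
  simpa only [Pi.mul_def, mul_pow] using hsq.integrable_mul hA.integrable_sq hY.integrable_sq

theorem ProbabilityTheory.Indep.indepFun_of_measurable {m : MeasurableSpace Ω} {A Z : Ω → ℝ}
    (h : Indep (MeasurableSpace.comap A inferInstance) m μ) (hZ : Measurable[m] Z) :
    IndepFun A Z μ :=
  (IndepFun_iff_Indep A Z μ).2 (indep_of_indep_of_le_right h hZ.comap_le)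

theorem integral_sq_eq_variance_of_integral_eq_zero [IsProbabilityMeasure μ] {A : Ω → ℝ}
    (hA : MemLp A 2 μ) (hmean : ∫ ω, A ω ∂μ = 0) :
    ∫ ω, A ω ^ 2 ∂μ = variance A μ := by
  rw [variance_eq_sub hA]
  simp [hmean]

theorem integral_sq_sum_mul_of_indep [IsProbabilityMeasure μ] {ι : Type*} [Fintype ι]
    {A Y : ι → Ω → ℝ} {v : ℝ} {m : ι → MeasurableSpace Ω} (hA : ∀ j, MemLp (A j) 2 μ)
    (hmean : ∀ j, ∫ ω, A j ω ∂μ = 0) (hvar : ∀ j, variance (A j) μ = v)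
    (hY : ∀ j, MemLp (Y j) 2 μ)
    (hAm : ∀ j k, k ≠ j → Measurable[m j] (A k)) (hYm : ∀ j k, Measurable[m j] (Y k))
    (hindep : ∀ j, Indep (MeasurableSpace.comap (A j) inferInstance) (m j) μ) :
    ∫ ω, (∑ j, A j ω * Y j ω) ^ 2 ∂μ = v * ∑ j, ∫ ω, Y j ω ^ 2 ∂μ := by
  have hAY : ∀ j, MemLp (fun ω => A j ω * Y j ω) 2 μ := fun j =>
    ((hindep j).indepFun_of_measurable (hYm j j)).memLp_two_mul (hA j) (hY j)
  have hdiag : ∀ j, ∫ ω, (A j ω * Y j ω) * (A j ω * Y j ω) ∂μ = v * ∫ ω, Y j ω ^ 2 ∂μ := by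
    intro j
    have hind : IndepFun (fun ω => A j ω ^ 2) (fun ω => Y j ω ^ 2) μ :=
      ((hindep j).indepFun_of_measurable (hYm j j)).comp
        (measurable_id.pow_const 2) (measurable_id.pow_const 2)
    rw [← hvar j, ← integral_sq_eq_variance_of_integral_eq_zero (hA j) (hmean j),
      ← hind.integral_fun_mul_eq_mul_integral (hA j).integrable_sq.1 (hY j).integrable_sq.1]
    congr 1 with ω
    ring
  have hcross : ∀ j k, j ≠ k → ∫ ω, (A j ω * Y j ω) * (A k ω * Y k ω) ∂μ = 0 := by
    intro j k hjk
    have hind : IndepFun (A j) (fun ω => A k ω * (Y j ω * Y k ω)) μ :=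
      (hindep j).indepFun_of_measurable
        ((hAm j k hjk.symm).mul ((hYm j j).mul (hYm j k)))
    calc ∫ ω, (A j ω * Y j ω) * (A k ω * Y k ω) ∂μ
        = ∫ ω, A j ω * (A k ω * (Y j ω * Y k ω)) ∂μ := by congr 1 with ω; ring
      _ = 0 := by
        rw [hind.integral_fun_mul_eq_mul_integral (hA j).1
          ((hA k).1.mul ((hY j).1.mul (hY k).1)), hmean j, zero_mul]
  have hint : ∀ j k, Integrable (fun ω => (A j ω * Y j ω) * (A k ω * Y k ω)) μ :=
    fun j k => (hAY j).integrable_mul (hAY k)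
  simp_rw [sq (∑ j, _), Finset.sum_mul_sum, Finset.mul_sum]
  rw [integral_finsetSum _ fun j _ => integrable_finsetSum _ fun k _ => hint j k]
  refine Finset.sum_congr rfl fun j _ => ?_
  rw [integral_finsetSum _ fun k _ => hint j k,
    Finset.sum_eq_single j (fun k _ hkj => hcross j k hkj.symm) (by simp), hdiag]

theorem ProbabilityTheory.iIndepFun.indep_comap_iSup_compl {ι : Type*} {β : ι → Type*}
    {m : ∀ i, MeasurableSpace (β i)} {f : ∀ i, Ω → β i} (hf : iIndepFun f μ)
    (hmeas : ∀ i, Measurable (f i)) (p : ι) :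
    Indep ((m p).comap (f p)) (⨆ q ∈ ({p}ᶜ : Set ι), (m q).comap (f q)) μ :=
  indep_of_indep_of_le_left
    (indep_iSup_of_disjoint (fun i => (hmeas i).comap_le) hf.iIndep disjoint_compl_right)
    (le_biSup (fun q => (m q).comap (f q)) (Set.mem_singleton p))

theorem measure_lt_abs_le_integral_sq_div [IsFiniteMeasure μ] {f : Ω → ℝ} (hf : MemLp f 2 μ)
    {ε : ℝ} (hε : 0 < ε) :
    μ {ω | ε < |f ω|} ≤ ENNReal.ofReal ((∫ ω, f ω ^ 2 ∂μ) / ε ^ 2) := by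
  have hsub : {ω | ε < |f ω|} ⊆ {ω | ε ^ 2 ≤ f ω ^ 2} := fun ω (hω : ε < |f ω|) => by
    simpa only [Set.mem_ofPred_eq, sq_abs] using pow_le_pow_left₀ hε.le hω.le 2
  have hmarkov := mul_meas_ge_le_integral_of_nonneg (ae_of_all μ fun ω => sq_nonneg (f ω))
    hf.integrable_sq (ε ^ 2)
  calc μ {ω | ε < |f ω|} ≤ μ {ω | ε ^ 2 ≤ f ω ^ 2} := measure_mono hsub
    _ = ENNReal.ofReal (μ.real {ω | ε ^ 2 ≤ f ω ^ 2}) := (ofReal_measureReal).symm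
    _ ≤ ENNReal.ofReal ((∫ ω, f ω ^ 2 ∂μ) / ε ^ 2) :=
      ENNReal.ofReal_le_ofReal ((le_div_iff₀' (by positivity)).2 hmarkov)

end SecondMoment

abbrev WeightIndex (L : ℕ) (d : ℕ → ℕ) : Type :=
  (l : Fin (L + 1)) × (Fin (d (l.1 + 1)) × Fin (d l.1))

section RandomMLP

variable {Ω : Type*} {mΩ : MeasurableSpace Ω} {μ : Measure Ω} {L : ℕ} {d : ℕ → ℕ}
  {W : (l : ℕ) → Ω → Matrix (Fin (d (l + 1))) (Fin (d l)) ℝ}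

def weightEntry (W : (l : ℕ) → Ω → Matrix (Fin (d (l + 1))) (Fin (d l)) ℝ)
    (p : WeightIndex L d) : Ω → ℝ :=
  fun ω => W p.1 ω p.2.1 p.2.2

abbrev offLayer (W : (l : ℕ) → Ω → Matrix (Fin (d (l + 1))) (Fin (d l)) ℝ) (L l : ℕ) :
    MeasurableSpace Ω :=
  ⨆ q ∈ {q : WeightIndex L d | (q.1 : ℕ) ≠ l},
    MeasurableSpace.comap (weightEntry W q) inferInstance

theorem measurable_offLayer_weight {l l' : ℕ} (hl' : l' ≤ L) (hne : l' ≠ l)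
    (i : Fin (d (l' + 1))) (j : Fin (d l')) : Measurable[offLayer W L l] fun ω => W l' ω i j :=
  measurable_iff_comap_le.2 <| le_biSup (fun q : WeightIndex L d =>
    MeasurableSpace.comap (weightEntry W q) inferInstance) (i := ⟨⟨l', by omega⟩, (i, j)⟩) hne

theorem memLp_integral_sq_weight_mulVec [IsProbabilityMeasure μ]
    (hWindep : iIndepFun (weightEntry (L := L) W) μ)
    (hWmeas : ∀ l i j, Measurable fun ω => W l ω i j)
    {l : ℕ} (hl : l ≤ L) {v : ℝ} (hWL2 : ∀ i j, MemLp (fun ω => W l ω i j) 2 μ)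
    (hmean : ∀ i j, ∫ ω, W l ω i j ∂μ = 0) (hvar : ∀ i j, variance (fun ω => W l ω i j) μ = v)
    {Y : Fin (d l) → Ω → ℝ} (hY : ∀ j, MemLp (Y j) 2 μ)
    (hYm : ∀ j, Measurable[offLayer W L l] (Y j)) (i : Fin (d (l + 1))) :
    MemLp (fun ω => (W l ω *ᵥ fun j => Y j ω) i) 2 μ ∧
      ∫ ω, (W l ω *ᵥ fun j => Y j ω) i ^ 2 ∂μ = v * ∑ j, ∫ ω, Y j ω ^ 2 ∂μ := by
  let p : Fin (d l) → WeightIndex L d := fun j => ⟨⟨l, by omega⟩, (i, j)⟩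
  let F : WeightIndex L d → MeasurableSpace Ω := fun q =>
    MeasurableSpace.comap (weightEntry W q) inferInstance
  let m : Fin (d l) → MeasurableSpace Ω := fun j => ⨆ q ∈ ({p j}ᶜ : Set (WeightIndex L d)), F q
  have hindep : ∀ j, Indep (MeasurableSpace.comap (fun ω => W l ω i j) inferInstance) (m j) μ :=
    fun j => hWindep.indep_comap_iSup_compl (fun q => hWmeas _ _ _) (p j)
  have hAm : ∀ j k, k ≠ j → Measurable[m j] fun ω => W l ω i k := fun j k hkj =>
    measurable_iff_comap_le.2 <| le_biSup F (i := p k) fun h => hkj (by simpa [p] using h)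
  have hYm' : ∀ j k, Measurable[m j] (Y k) := fun j k =>
    (hYm k).mono (biSup_mono fun q hq h => hq (by rw [h])) le_rfl
  simp only [mulVec, dotProduct]
  exact ⟨memLp_finsetSum _ fun j _ =>
      ((hindep j).indepFun_of_measurable (hYm' j j)).memLp_two_mul (hWL2 i j) (hY j),
    integral_sq_sum_mul_of_indep (fun j => hWL2 i j) (fun j => hmean i j) (fun j => hvar i j) hY
      hAm hYm' hindep⟩

variable {b : (l : ℕ) → Fin (d (l + 1)) → ℝ} {σ : ℝ → ℝ} {x : ℝ}

theorem memLp_integral_sq_mlpDeriv_zero [IsProbabilityMeasure μ]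
    (hWindep : iIndepFun (weightEntry (L := L) W) μ)
    (hWmeas : ∀ l i j, Measurable fun ω => W l ω i j)
    {v : ℝ} (hWL2 : ∀ i j, MemLp (fun ω => W 0 ω i j) 2 μ)
    (hmean : ∀ i j, ∫ ω, W 0 ω i j ∂μ = 0) (hvar : ∀ i j, variance (fun ω => W 0 ω i j) μ = v)
    (i : Fin (d 1)) :
    MemLp (fun ω => mlpDeriv d (fun l => W l ω) b σ x 0 i) 2 μ ∧
      ∫ ω, mlpDeriv d (fun l => W l ω) b σ x 0 i ^ 2 ∂μ = v * d 0 := by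
  have h := memLp_integral_sq_weight_mulVec hWindep hWmeas (Nat.zero_le L) hWL2 hmean hvar
    (Y := fun _ _ => 1) (fun _ => memLp_const 1) (fun _ => measurable_const) i
  simpa [mlpDeriv] using h

theorem memLp_integral_sq_mlpDeriv_succ_le [IsProbabilityMeasure μ]
    (hWindep : iIndepFun (weightEntry (L := L) W) μ)
    (hWmeas : ∀ l i j, Measurable fun ω => W l ω i j)
    (hσ : Measurable σ) (hσ' : Measurable (deriv σ)) (hσbound : ∀ t, |deriv σ t| ≤ 1)
    {l : ℕ} (hl : l + 1 ≤ L) {v : ℝ} (hWL2 : ∀ i j, MemLp (fun ω => W (l + 1) ω i j) 2 μ)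
    (hmean : ∀ i j, ∫ ω, W (l + 1) ω i j ∂μ = 0)
    (hvar : ∀ i j, variance (fun ω => W (l + 1) ω i j) μ = v)
    (hX : ∀ j, MemLp (fun ω => mlpDeriv d (fun l => W l ω) b σ x l j) 2 μ)
    (i : Fin (d (l + 2))) :
    MemLp (fun ω => mlpDeriv d (fun l => W l ω) b σ x (l + 1) i) 2 μ ∧
      ∫ ω, mlpDeriv d (fun l => W l ω) b σ x (l + 1) i ^ 2 ∂μ ≤
        v * ∑ j, ∫ ω, mlpDeriv d (fun l => W l ω) b σ x l j ^ 2 ∂μ := by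
  set X := fun j ω => mlpDeriv d (fun l => W l ω) b σ x l j
  set Y := fun j ω => deriv σ (mlpPre d (fun l => W l ω) b σ l x j) * X j ω
  have hYm : ∀ {m : MeasurableSpace Ω}, (∀ l' ≤ l, ∀ i j, Measurable[m] fun ω => W l' ω i j) →
      ∀ j, Measurable[m] (Y j) := fun hW j =>
    (hσ'.comp (measurable_mlpPre hσ x hW j)).mul (measurable_mlpDeriv hσ hσ' x hW j)
  have hYX : ∀ j ω, |Y j ω| ≤ |X j ω| := fun j ω => by
    simp only [Y, abs_mul]
    exact mul_le_of_le_one_left (abs_nonneg _) (hσbound _)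
  have hY : ∀ j, MemLp (Y j) 2 μ := fun j =>
    (hX j).of_le (hYm (fun l' _ => hWmeas l') j).aestronglyMeasurable
      (ae_of_all _ fun ω => by simpa only [Real.norm_eq_abs] using hYX j ω)
  obtain ⟨hmem, heq⟩ := memLp_integral_sq_weight_mulVec hWindep hWmeas hl hWL2 hmean hvar hY
    (hYm fun l' hl' => measurable_offLayer_weight (by omega) (by omega)) i
  refine ⟨hmem, heq.trans_le ?_⟩
  simp only [Finset.mul_sum]
  exact Finset.sum_le_sum fun j _ => mul_le_mul_of_nonneg_left
    (integral_mono (hY j).integrable_sq (hX j).integrable_sq fun ω => sq_le_sq.2 (hYX j ω))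
    (hvar i j ▸ variance_nonneg _ _)

theorem memLp_sum_integral_sq_mlpDeriv_le [IsProbabilityMeasure μ]
    (hWindep : iIndepFun (weightEntry (L := L) W) μ)
    (hWmeas : ∀ l i j, Measurable fun ω => W l ω i j)
    (hσ : Measurable σ) (hσ' : Measurable (deriv σ)) (hσbound : ∀ t, |deriv σ t| ≤ 1) {m : ℕ}
    (h0 : d 0 = 1) (hdm : ∀ l, 1 ≤ l → l ≤ L → d l = m)
    (hWL2 : ∀ l i j, MemLp (fun ω => W l ω i j) 2 μ)
    (hWmean : ∀ l, l ≤ L → ∀ i j, ∫ ω, W l ω i j ∂μ = 0)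
    (hvarFirst : ∀ i j, variance (fun ω => W 0 ω i j) μ = 2 / (m + 1))
    (hvarMid : ∀ l, 1 ≤ l → l < L → ∀ i j, variance (fun ω => W l ω i j) μ = 1 / m)
    {l : ℕ} (hl : l < L) :
    (∀ j, MemLp (fun ω => mlpDeriv d (fun l => W l ω) b σ x l j) 2 μ) ∧
      ∑ j, ∫ ω, mlpDeriv d (fun l => W l ω) b σ x l j ^ 2 ∂μ ≤ m * (2 / (m + 1)) := by
  induction l with
  | zero =>
    have h := memLp_integral_sq_mlpDeriv_zero (b := b) (σ := σ) (x := x) hWindep hWmeas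
      (hWL2 0) (hWmean 0 L.zero_le) hvarFirst
    refine ⟨fun j => (h j).1, le_of_eq ?_⟩
    simp only [fun j => (h j).2, Finset.sum_const, Finset.card_univ, Fintype.card_fin, h0,
      hdm 1 le_rfl hl, nsmul_eq_mul]
    ring
  | succ l ih =>
    obtain ⟨hX, hsum⟩ := ih (by omega)
    have h := memLp_integral_sq_mlpDeriv_succ_le hWindep hWmeas hσ hσ' hσbound hl.le (hWL2 _)
      (hWmean _ hl.le) (hvarMid (l + 1) (by omega) hl) hX
    refine ⟨fun i => (h i).1, ?_⟩
    have hm : (m : ℝ) * (1 / m) ≤ 1 := by rcases eq_or_ne (m : ℝ) 0 with h | h <;> simp [h]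
    have hS : 0 ≤ ∑ j, ∫ ω, mlpDeriv d (fun l => W l ω) b σ x l j ^ 2 ∂μ :=
      Finset.sum_nonneg fun j _ => integral_nonneg fun ω => sq_nonneg _
    calc ∑ i, ∫ ω, mlpDeriv d (fun l => W l ω) b σ x (l + 1) i ^ 2 ∂μ
        ≤ ∑ _i : Fin (d (l + 2)), 1 / (m : ℝ) *
            ∑ j, ∫ ω, mlpDeriv d (fun l => W l ω) b σ x l j ^ 2 ∂μ :=
          Finset.sum_le_sum fun i _ => (h i).2
      _ = m * (1 / m) * ∑ j, ∫ ω, mlpDeriv d (fun l => W l ω) b σ x l j ^ 2 ∂μ := by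
          simp only [Finset.sum_const, Finset.card_univ, Fintype.card_fin,
            hdm (l + 2) (by omega) hl, nsmul_eq_mul, mul_assoc]
      _ ≤ m * (2 / (m + 1)) := (mul_le_of_le_one_left hS hm).trans hsum

end RandomMLP

theorem prob_mlp_deriv_gt_le_general
    {Ω : Type*} [MeasurableSpace Ω] (μ : Measure Ω) [IsProbabilityMeasure μ]
    (L m : ℕ) (hL : 1 ≤ L) (hm : 1 ≤ m)
    (d : ℕ → ℕ) (h0 : d 0 = 1)
    (hdm : ∀ l, 1 ≤ l → l ≤ L → d l = m)
    (W : (l : ℕ) → Ω → Matrix (Fin (d (l + 1))) (Fin (d l)) ℝ)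
    (hWmeas : ∀ l i j, Measurable fun ω => W l ω i j)
    (hWL2 : ∀ l i j, MemLp (fun ω => W l ω i j) 2 μ)
    (hWindep : iIndepFun
      (fun p : (l : Fin (L + 1)) × (Fin (d (l.1 + 1)) × Fin (d l.1)) =>
        fun ω => W p.1 ω p.2.1 p.2.2) μ)
    (hWmean : ∀ l, l ≤ L → ∀ i j, ∫ ω, W l ω i j ∂μ = 0)
    (hvarFirst : ∀ i j, variance (fun ω => W 0 ω i j) μ = 2 / (m + 1))
    (hvarLast : ∀ i j, variance (fun ω => W L ω i j) μ = 2 / (m + 1))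
    (hvarMid : ∀ l, 1 ≤ l → l < L → ∀ i j, variance (fun ω => W l ω i j) μ = 1 / m)
    (σ : ℝ → ℝ) (hσ : Differentiable ℝ σ)
    (hσ' : Measurable (deriv σ)) (hσbound : ∀ t, |deriv σ t| ≤ 1)
    (x : ℝ) (i : Fin (d (L + 1))) (ε : ℝ) (hε : 0 < ε) :
    μ {ω | ε < |deriv (fun t => mlpPre d (fun l => W l ω) (fun _ => 0) σ L t i) x|}
      ≤ ENNReal.ofReal (4 / (m * ε ^ 2)) := by
  obtain ⟨L, rfl⟩ : ∃ L', L = L' + 1 := ⟨L - 1, by omega⟩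
  have hm0 : (0 : ℝ) < m := by exact_mod_cast hm
  have hσm := hσ.continuous.measurable
  obtain ⟨hX, hsum⟩ := memLp_sum_integral_sq_mlpDeriv_le (b := fun _ => 0) (x := x) hWindep
    hWmeas hσm hσ' hσbound h0 hdm hWL2 hWmean hvarFirst hvarMid L.lt_succ_self
  obtain ⟨hXL, hXLsq⟩ := memLp_integral_sq_mlpDeriv_succ_le hWindep hWmeas hσm hσ' hσbound
    le_rfl (hWL2 _) (hWmean _ le_rfl) hvarLast hX i
  have hbound : ∫ ω, mlpDeriv d (fun l => W l ω) (fun _ => 0) σ x (L + 1) i ^ 2 ∂μ ≤ 4 / m :=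
    calc _ ≤ 2 / ((m : ℝ) + 1) * (m * (2 / (m + 1))) := hXLsq.trans
          (mul_le_mul_of_nonneg_left hsum (by positivity))
      _ = 4 * m / ((m : ℝ) + 1) ^ 2 := by field_simp; ring
      _ ≤ 4 / m := by
          rw [div_le_div_iff₀ (by positivity) hm0]
          nlinarith
  simp only [(hasDerivAt_mlpPre _ hσ x _ i).deriv]
  refine (measure_lt_abs_le_integral_sq_div hXL hε).trans (ENNReal.ofReal_le_ofReal ?_)
  rw [← div_div]
  exact div_le_div_of_nonneg_right hbound (sq_nonneg ε)

/-- For a randomly initialized MLP with scalar input and output,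
hidden widths all equal to `m`, zero biases, jointly independent mean-zero
square-integrable weight entries with Glorot variances (`2/(m+1)` for the first and last
layers, `1/m` for the middle layers), and a differentiable activation `σ` with measurable
derivative bounded by `1`, for every `ε > 0` one has
`ℙ(|∂u_θ/∂x (x)| > ε) ≤ 4 / (m ε²)`. -/
theorem prob_mlp_deriv_gt_le
    {Ω : Type*} [MeasurableSpace Ω] (μ : Measure Ω) [IsProbabilityMeasure μ]
    (L m : ℕ) (hL : 1 ≤ L) (hm : 1 ≤ m)
    (d : ℕ → ℕ) (h0 : d 0 = 1) (hdL : d (L + 1) = 1)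
    (hdm : ∀ l, 1 ≤ l → l ≤ L → d l = m)
    (W : (l : ℕ) → Ω → Matrix (Fin (d (l + 1))) (Fin (d l)) ℝ)
    (hWmeas : ∀ l i j, Measurable fun ω => W l ω i j)
    (hWL2 : ∀ l i j, MemLp (fun ω => W l ω i j) 2 μ)
    (hWindep : iIndepFun
      (fun p : (l : Fin (L + 1)) × (Fin (d (l.1 + 1)) × Fin (d l.1)) =>
        fun ω => W p.1 ω p.2.1 p.2.2) μ)
    (hWmean : ∀ l, l ≤ L → ∀ i j, ∫ ω, W l ω i j ∂μ = 0)
    (hvarFirst : ∀ i j, variance (fun ω => W 0 ω i j) μ = 2 / (m + 1))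
    (hvarLast : ∀ i j, variance (fun ω => W L ω i j) μ = 2 / (m + 1))
    (hvarMid : ∀ l, 1 ≤ l → l < L → ∀ i j, variance (fun ω => W l ω i j) μ = 1 / m)
    (σ : ℝ → ℝ) (hσ : Differentiable ℝ σ)
    (hσ' : Measurable (deriv σ)) (hσbound : ∀ t, |deriv σ t| ≤ 1)
    (x : ℝ) (i : Fin (d (L + 1))) (ε : ℝ) (hε : 0 < ε) :
    μ {ω | ε < |deriv (fun t => mlpPre d (fun l => W l ω) (fun _ => 0) σ L t i) x|}
      ≤ ENNReal.ofReal (4 / (m * ε ^ 2)) :=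
  prob_mlp_deriv_gt_le_general μ L m hL hm d h0 hdm W hWmeas hWL2 hWindep hWmean hvarFirst hvarLast
    hvarMid σ hσ hσ' hσbound x i ε hε
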